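/- arXiv:1810.08007 — 2 statements merged into one kernel-verified Lean document; each statement's English description precedes it below -/
import Mathlib

section
/- Let N ≥ 1, σ ∈ (0, 1), and C₁, C₂ > 0. Let f : ℝ → ℝ be continuously differentiable and suppose that |f(t) t| ≤ C₁ (1 + t^σ) and 0 ≤ f(t) + f'(t) t ≤ C₂ for all t ≥ 0. Define b : ℝ^N → ℝ^N by b(ξ) := f(|ξ|) ξ. Then: (i) b is monotone, i.e. (b(ξ) − b(η)) · (ξ − η) ≥ 0 for all ξ, η ∈ ℝ^N; (ii) b is globally Lipschitz continuous with Lipschitz constant C₂, i.e. |b(ξ) − b(η)| ≤ C₂ |ξ − η| for all ξ, η ∈ ℝ^N; (iii) |b(ξ)| ≤ C₁ (1 + |ξ|^σ) for all ξ ∈ ℝ^N. -/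
/-!
With `g t = f t * t`, the hypothesis says `0 ≤ g' ≤ C₂` on `[0, ∞)`, so `g` is monotone and
`C₂`-Lipschitz there, and (since `g 0 = 0`) `0 ≤ f ≤ C₂`. For `r = ‖ξ‖`, `s = ‖η‖` one has
`⟪b ξ - b η, ξ - η⟫ = (g r - g s)(r - s) + (f r + f s)(r s - ⟪ξ, η⟫)` and
`C₂² ‖ξ - η‖² - ‖b ξ - b η‖² = C₂² (r - s)² - (g r - g s)² + 2 (C₂² - f r f s)(r s - ⟪ξ, η⟫)`,
and every term on the right is nonnegative by Cauchy–Schwarz.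
-/

open Set

open scoped RealInnerProductSpace

section Scalar

variable {f : ℝ → ℝ} {C : ℝ}

theorem hasDerivAt_mul_id {t : ℝ} (hf : DifferentiableAt ℝ f t) :
    HasDerivAt (fun t => f t * t) (f t + deriv f t * t) t :=
  (hf.hasDerivAt.fun_mul (hasDerivAt_id' t)).congr_deriv (by ring)

variable (hf : Differentiable ℝ f) (hderiv : ∀ t, 0 ≤ t → f t + deriv f t * t ∈ Icc 0 C)
include hf hderiv

theorem mul_id_sub_mem_Icc {s r : ℝ} (hs : 0 ≤ s) (hsr : s ≤ r) :
    f r * r - f s * s ∈ Icc 0 (C * (r - s)) := by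
  have hg : ∀ t, HasDerivAt (fun t => f t * t) (f t + deriv f t * t) t :=
    fun t => hasDerivAt_mul_id (hf t)
  have hcont : ContinuousOn (fun t => f t * t) (Ici 0) :=
    (hf.continuous.mul continuous_id).continuousOn
  have hdiff : DifferentiableOn ℝ (fun t => f t * t) (interior (Ici 0)) :=
    fun t _ => (hg t).differentiableAt.differentiableWithinAt
  have hderiv' : ∀ t ∈ interior (Ici (0 : ℝ)), deriv (fun t => f t * t) t ∈ Icc 0 C := by
    intro t ht
    rw [interior_Ici] at ht
    rw [(hg t).deriv]
    exact hderiv t (le_of_lt ht)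
  have hr : r ∈ Ici (0 : ℝ) := hs.trans hsr
  constructor
  · simpa using (convex_Ici 0).mul_sub_le_image_sub_of_le_deriv hcont hdiff
      (fun t ht => (hderiv' t ht).1) s hs r hr hsr
  · exact (convex_Ici 0).image_sub_le_mul_sub_of_deriv_le hcont hdiff
      (fun t ht => (hderiv' t ht).2) s hs r hr hsr

theorem mem_Icc_of_deriv_mul_id_mem_Icc {t : ℝ} (ht : 0 ≤ t) : f t ∈ Icc 0 C := by
  rcases ht.eq_or_lt with rfl | ht
  · simpa using hderiv 0 le_rfl
  · obtain ⟨hlow, hup⟩ := mul_id_sub_mem_Icc hf hderiv le_rfl ht.le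
    simp only [mul_zero, sub_zero] at hlow hup
    exact ⟨nonneg_of_mul_nonneg_left hlow ht, le_of_mul_le_mul_right hup ht⟩

theorem mul_id_sub_mul_sub_nonneg {a b : ℝ} (ha : 0 ≤ a) (hb : 0 ≤ b) :
    0 ≤ (f a * a - f b * b) * (a - b) := by
  rcases le_total b a with hba | hab
  · exact mul_nonneg (mul_id_sub_mem_Icc hf hderiv hb hba).1 (sub_nonneg.mpr hba)
  · rw [← neg_sub (f b * b), ← neg_sub b, neg_mul_neg]
    exact mul_nonneg (mul_id_sub_mem_Icc hf hderiv ha hab).1 (sub_nonneg.mpr hab)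

theorem abs_mul_id_sub_le {a b : ℝ} (ha : 0 ≤ a) (hb : 0 ≤ b) :
    |f a * a - f b * b| ≤ C * |a - b| := by
  rcases le_total b a with hba | hab
  · obtain ⟨hlow, hup⟩ := mul_id_sub_mem_Icc hf hderiv hb hba
    rwa [abs_of_nonneg hlow, abs_of_nonneg (sub_nonneg.mpr hba)]
  · obtain ⟨hlow, hup⟩ := mul_id_sub_mem_Icc hf hderiv ha hab
    rwa [abs_sub_comm, abs_of_nonneg hlow, abs_sub_comm, abs_of_nonneg (sub_nonneg.mpr hab)]

end Scalar

section Radial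

variable {E : Type*} [NormedAddCommGroup E] [InnerProductSpace ℝ E] {φ : ℝ → ℝ}

theorem inner_radial_sub_nonneg (hφ : ∀ t, 0 ≤ t → 0 ≤ φ t)
    (hmono : ∀ a b, 0 ≤ a → 0 ≤ b → 0 ≤ (φ a * a - φ b * b) * (a - b)) (ξ η : E) :
    0 ≤ ⟪φ ‖ξ‖ • ξ - φ ‖η‖ • η, ξ - η⟫ := by
  have hexpand : ⟪φ ‖ξ‖ • ξ - φ ‖η‖ • η, ξ - η⟫ =
      (φ ‖ξ‖ * ‖ξ‖ - φ ‖η‖ * ‖η‖) * (‖ξ‖ - ‖η‖)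
        + (φ ‖ξ‖ + φ ‖η‖) * (‖ξ‖ * ‖η‖ - ⟪ξ, η⟫) := by
    simp only [inner_sub_left, inner_sub_right, real_inner_smul_left,
      real_inner_self_eq_norm_sq, real_inner_comm η ξ]
    ring
  rw [hexpand]
  have hcs : 0 ≤ ‖ξ‖ * ‖η‖ - ⟪ξ, η⟫ := sub_nonneg.mpr (real_inner_le_norm ξ η)
  have hsum : 0 ≤ φ ‖ξ‖ + φ ‖η‖ := add_nonneg (hφ _ (norm_nonneg ξ)) (hφ _ (norm_nonneg η))
  exact add_nonneg (hmono _ _ (norm_nonneg ξ) (norm_nonneg η)) (mul_nonneg hsum hcs)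

theorem norm_radial_sub_le {L : ℝ} (hφ : ∀ t, 0 ≤ t → φ t ∈ Icc 0 L)
    (hlip : ∀ a b, 0 ≤ a → 0 ≤ b → |φ a * a - φ b * b| ≤ L * |a - b|) (ξ η : E) :
    ‖φ ‖ξ‖ • ξ - φ ‖η‖ • η‖ ≤ L * ‖ξ - η‖ := by
  obtain ⟨hφξ, hφξL⟩ := hφ _ (norm_nonneg ξ)
  obtain ⟨hφη, hφηL⟩ := hφ _ (norm_nonneg η)
  have hL : 0 ≤ L := hφξ.trans hφξL
  refine le_of_pow_le_pow_left₀ two_ne_zero (mul_nonneg hL (norm_nonneg _)) ?_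
  have hexpand : (L * ‖ξ - η‖) ^ 2 - ‖φ ‖ξ‖ • ξ - φ ‖η‖ • η‖ ^ 2 =
      (L * |‖ξ‖ - ‖η‖|) ^ 2 - |φ ‖ξ‖ * ‖ξ‖ - φ ‖η‖ * ‖η‖| ^ 2
        + 2 * (L ^ 2 - φ ‖ξ‖ * φ ‖η‖) * (‖ξ‖ * ‖η‖ - ⟪ξ, η⟫) := by
    rw [mul_pow, norm_sub_sq_real, ← real_inner_self_eq_norm_sq (_ - _)]
    simp only [inner_sub_left, inner_sub_right, real_inner_smul_left, real_inner_smul_right,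
      real_inner_self_eq_norm_sq, real_inner_comm η ξ, norm_smul, Real.norm_eq_abs, mul_pow,
      sq_abs]
    ring
  have hsq : |φ ‖ξ‖ * ‖ξ‖ - φ ‖η‖ * ‖η‖| ^ 2 ≤ (L * |‖ξ‖ - ‖η‖|) ^ 2 :=
    pow_le_pow_left₀ (abs_nonneg _) (hlip _ _ (norm_nonneg ξ) (norm_nonneg η)) 2
  have hprod : φ ‖ξ‖ * φ ‖η‖ ≤ L ^ 2 := by
    rw [sq]
    exact mul_le_mul hφξL hφηL hφη hL
  have hcs : 0 ≤ ‖ξ‖ * ‖η‖ - ⟪ξ, η⟫ := sub_nonneg.mpr (real_inner_le_norm ξ η)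
  nlinarith [mul_nonneg (sub_nonneg.mpr hprod) hcs]

end Radial

theorem radial_vector_field_properties_general
    (N : ℕ) (σ C₁ C₂ : ℝ)
    (f : ℝ → ℝ) (hf : ContDiff ℝ 1 f)
    (hgrowth : ∀ t : ℝ, 0 ≤ t → |f t * t| ≤ C₁ * (1 + t ^ σ))
    (hbound : ∀ t : ℝ, 0 ≤ t → 0 ≤ f t + deriv f t * t ∧ f t + deriv f t * t ≤ C₂)
    (b : EuclideanSpace ℝ (Fin N) → EuclideanSpace ℝ (Fin N))
    (hb : ∀ ξ, b ξ = f ‖ξ‖ • ξ) :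
    (∀ ξ η : EuclideanSpace ℝ (Fin N), (0 : ℝ) ≤ inner ℝ (b ξ - b η) (ξ - η)) ∧
    (∀ ξ η : EuclideanSpace ℝ (Fin N), ‖b ξ - b η‖ ≤ C₂ * ‖ξ - η‖) ∧
    (∀ ξ : EuclideanSpace ℝ (Fin N), ‖b ξ‖ ≤ C₁ * (1 + ‖ξ‖ ^ σ)) := by
  have hfd : Differentiable ℝ f := hf.differentiable one_ne_zero
  have hf_mem : ∀ t, 0 ≤ t → f t ∈ Icc 0 C₂ :=
    fun t ht => mem_Icc_of_deriv_mul_id_mem_Icc hfd hbound ht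
  refine ⟨fun ξ η => ?_, fun ξ η => ?_, fun ξ => ?_⟩
  · rw [hb, hb]
    exact inner_radial_sub_nonneg (fun t ht => (hf_mem t ht).1)
      (fun a b ha hb => mul_id_sub_mul_sub_nonneg hfd hbound ha hb) ξ η
  · rw [hb, hb]
    exact norm_radial_sub_le hf_mem (fun a b ha hb => abs_mul_id_sub_le hfd hbound ha hb) ξ η
  · simpa [hb, norm_smul, abs_mul] using hgrowth ‖ξ‖ (norm_nonneg ξ)

/-- If `f` is `C¹` with `|f(t)t| ≤ C₁(1+t^σ)` and `0 ≤ f(t) + f'(t)t ≤ C₂` for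
`t ≥ 0`, then `b(ξ) := f(|ξ|)ξ` is monotone, globally Lipschitz with constant
`C₂`, and satisfies `|b(ξ)| ≤ C₁(1+|ξ|^σ)`. -/
theorem radial_vector_field_properties
    (N : ℕ) (hN : 1 ≤ N) (σ C₁ C₂ : ℝ) (hσ : σ ∈ Set.Ioo (0 : ℝ) 1)
    (hC₁ : 0 < C₁) (hC₂ : 0 < C₂)
    (f : ℝ → ℝ) (hf : ContDiff ℝ 1 f)
    (hgrowth : ∀ t : ℝ, 0 ≤ t → |f t * t| ≤ C₁ * (1 + t ^ σ))
    (hbound : ∀ t : ℝ, 0 ≤ t → 0 ≤ f t + deriv f t * t ∧ f t + deriv f t * t ≤ C₂)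
    (b : EuclideanSpace ℝ (Fin N) → EuclideanSpace ℝ (Fin N))
    (hb : ∀ ξ, b ξ = f ‖ξ‖ • ξ) :
    (∀ ξ η : EuclideanSpace ℝ (Fin N), (0 : ℝ) ≤ inner ℝ (b ξ - b η) (ξ - η)) ∧
    (∀ ξ η : EuclideanSpace ℝ (Fin N), ‖b ξ - b η‖ ≤ C₂ * ‖ξ - η‖) ∧
    (∀ ξ : EuclideanSpace ℝ (Fin N), ‖b ξ‖ ≤ C₁ * (1 + ‖ξ‖ ^ σ)) :=
  radial_vector_field_properties_general N σ C₁ C₂ f hf hgrowth hbound b hb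
end

section
/- Define f₁, f₂ : ℝ → ℝ by f₁(ψ) := ((−1 + √(1 + 2ψ))/√(1 + 2ψ)) for ψ ≥ 0 and f₁(ψ) := ((1 − √(1 − 2ψ))/√(1 − 2ψ)) for ψ < 0, and f₂(ψ) := 1/√(1 + 2|ψ|). Then f₁ and f₂ are globally Lipschitz continuous on ℝ with Lipschitz constant 1. -/
/-!
Both functions are built from `g t = (√(1 + 2 t))⁻¹` on `t ≥ 0`: `f₂ = g ∘ |·|`, and `f₁` is the
odd extension of `1 - g`. Since `x ↦ (√x)⁻¹` is `1/2`-Lipschitz on `[1, ∞)`, `g` is `1`-Lipschitz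
on `[0, ∞)`. The odd extension of a `K`-Lipschitz function on `[0, ∞)` vanishing at `0` is again
`K`-Lipschitz: for arguments of opposite signs, compare both values with the value `0` at the origin.
-/

open Set Real

lemma lipschitzOnWith_inv_sqrt : LipschitzOnWith (1 / 2) (fun x : ℝ => (√x)⁻¹) (Ici 1) := by
  refine LipschitzOnWith.of_dist_le_mul fun x hx y hy => ?_
  wlog hxy : x ≤ y generalizing x y
  · rw [dist_comm, dist_comm x]
    exact this y hy x hx (le_of_not_ge hxy)
  have hx1 : 1 ≤ √x := one_le_sqrt.2 hx
  have hxy' : √x ≤ √y := sqrt_le_sqrt hxy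
  have hsq : (√y - √x) * (√y + √x) = y - x := by
    linear_combination Real.sq_sqrt (zero_le_one.trans (hx.trans hxy)) -
      Real.sq_sqrt (zero_le_one.trans hx)
  rw [Real.dist_eq, Real.dist_eq, abs_of_nonneg (sub_nonneg.2 (inv_anti₀ (by positivity) hxy')),
    abs_sub_comm, abs_of_nonneg (sub_nonneg.2 hxy)]
  calc (√x)⁻¹ - (√y)⁻¹ = (√y - √x) / (√x * √y) := inv_sub_inv (by linarith) (by linarith)
    _ ≤ √y - √x :=
      div_le_self (sub_nonneg.2 hxy') (one_le_mul_of_one_le_of_one_le hx1 (hx1.trans hxy'))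
    _ ≤ ((1 / 2 : NNReal) : ℝ) * (y - x) := by
      push_cast
      nlinarith

lemma lipschitzWith_one_add_two_mul : LipschitzWith 2 (fun t : ℝ => 1 + 2 * t) :=
  LipschitzWith.of_dist_le_mul fun x y => by
    rw [Real.dist_eq, Real.dist_eq, add_sub_add_left_eq_sub, ← mul_sub, abs_mul]
    norm_num

lemma lipschitzOnWith_inv_sqrt_one_add_two_mul :
    LipschitzOnWith 1 (fun t : ℝ => (√(1 + 2 * t))⁻¹) (Ici 0) := by
  have h := lipschitzOnWith_inv_sqrt.comp lipschitzWith_one_add_two_mul.lipschitzOnWith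
    (s := Ici 0) fun t (ht : 0 ≤ t) => show 1 ≤ 1 + 2 * t by linarith
  rwa [show (1 / 2 * 2 : NNReal) = 1 by norm_num] at h

noncomputable def oddExtension (h : ℝ → ℝ) (x : ℝ) : ℝ :=
  if 0 ≤ x then h x else -h (-x)

lemma LipschitzOnWith.abs_le_mul_of_eq_zero {h : ℝ → ℝ} {K : NNReal}
    (hh : LipschitzOnWith K h (Ici 0)) (h0 : h 0 = 0) {x : ℝ} (hx : 0 ≤ x) : |h x| ≤ K * x := by
  simpa [h0, Real.dist_eq, abs_of_nonneg hx] using hh.dist_le_mul x hx 0 self_mem_Ici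

lemma LipschitzOnWith.lipschitzWith_oddExtension {h : ℝ → ℝ} {K : NNReal}
    (hh : LipschitzOnWith K h (Ici 0)) (h0 : h 0 = 0) : LipschitzWith K (oddExtension h) := by
  refine LipschitzWith.of_dist_le_mul fun x y => ?_
  wlog hxy : x ≤ y generalizing x y
  · rw [dist_comm, dist_comm x]
    exact this y x (le_of_not_ge hxy)
  rcases le_or_gt 0 x with hx | hx
  · simpa only [oddExtension, hx, hxy.trans' hx, if_true] using
      hh.dist_le_mul x hx y (hx.trans hxy)
  rcases le_or_gt 0 y with hy | hy
  · simp only [oddExtension, hx.not_ge, hy, if_true, if_false, Real.dist_eq,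
      abs_of_nonpos (by linarith : x - y ≤ 0)]
    rw [neg_sub_left, abs_neg]
    linarith [abs_add_le (h y) (h (-x)), hh.abs_le_mul_of_eq_zero h0 hy,
      hh.abs_le_mul_of_eq_zero h0 (neg_nonneg.2 hx.le)]
  · simpa only [oddExtension, hx.not_ge, hy.not_ge, if_false, dist_neg_neg, neg_neg] using
      hh.dist_le_mul (-x) (neg_nonneg.2 hx.le) (-y) (neg_nonneg.2 hy.le)

lemma LipschitzWith.abs_sub_le {f : ℝ → ℝ} {K : NNReal} (hf : LipschitzWith K f) (x y : ℝ) :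
    |f x - f y| ≤ K * |x - y| := by
  simpa only [Real.dist_eq] using hf.dist_le_mul x y

lemma neg_one_add_div_self {s : ℝ} (hs : s ≠ 0) : (-1 + s) / s = 1 - s⁻¹ := by
  field_simp
  ring

/-- The functions `f₁` and `f₂` appearing in the relaxed optimality system are
globally Lipschitz continuous with Lipschitz constant `1`. -/
theorem f1_f2_globally_lipschitz
    (f₁ f₂ : ℝ → ℝ)
    (hf₁ : ∀ ψ : ℝ, f₁ ψ = if 0 ≤ ψ
      then (-1 + Real.sqrt (1 + 2 * ψ)) / Real.sqrt (1 + 2 * ψ)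
      else (1 - Real.sqrt (1 - 2 * ψ)) / Real.sqrt (1 - 2 * ψ))
    (hf₂ : ∀ ψ : ℝ, f₂ ψ = 1 / Real.sqrt (1 + 2 * |ψ|)) :
    (∀ ψ₁ ψ₂ : ℝ, |f₁ ψ₁ - f₁ ψ₂| ≤ 1 * |ψ₁ - ψ₂|) ∧
    (∀ ψ₁ ψ₂ : ℝ, |f₂ ψ₁ - f₂ ψ₂| ≤ 1 * |ψ₁ - ψ₂|) := by
  have hg := lipschitzOnWith_inv_sqrt_one_add_two_mul
  have hf₁_odd : f₁ = oddExtension fun t => 1 - (√(1 + 2 * t))⁻¹ := by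
    ext ψ
    rw [hf₁, oddExtension]
    split_ifs with hψ
    · exact neg_one_add_div_self (sqrt_ne_zero'.2 (by linarith))
    · rw [mul_neg, ← sub_eq_add_neg, ← neg_one_add_div_self (sqrt_ne_zero'.2 (by linarith)),
        ← neg_div, neg_add', neg_neg]
  have hf₂_comp : f₂ = (fun t => (√(1 + 2 * t))⁻¹) ∘ abs := by
    ext ψ
    rw [hf₂, one_div, Function.comp_apply]
  have h₁ : LipschitzWith 1 f₁ := by
    have h := (LipschitzWith.const (1 : ℝ)).lipschitzOnWith.sub hg
    rw [zero_add] at h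
    rw [hf₁_odd]
    exact h.lipschitzWith_oddExtension (by norm_num)
  have h₂ : LipschitzWith 1 f₂ := by
    have habs : LipschitzWith 1 (abs : ℝ → ℝ) := lipschitzWith_one_norm
    rw [hf₂_comp, ← lipschitzOnWith_univ, ← one_mul 1]
    exact hg.comp habs.lipschitzOnWith fun x _ => abs_nonneg x
  exact ⟨h₁.abs_sub_le, h₂.abs_sub_le⟩
end
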